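/- arXiv:2512.22171 — 2 statements merged into one kernel-verified Lean document; each statement's English description precedes it below -/
import Mathlib

section
/- Consider n ants on the unit interval [0,1], each at a distinct starting position and moving with unit speed either left or right; when two ants meet they both reverse direction, and an ant falls off when it reaches 0 or 1. Then every ant falls off by time 1. -/
/-- Ants-on-a-stick with reversal dynamics: `n` ants, `N` event intervals.
Trajectories are piecewise affine with slopes `±1`; at an event time where two
ants meet, they exchange (i.e. reverse) their slopes; ants not involved in a
collision keep their slope; collisions only occur at event times. -/
structure ReversalSystem (n N : ℕ) where
  x0 : Fin n → ℝ
  t : Fin (N + 1) → ℝ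
  s : Fin n → Fin N → ℝ
  x : Fin n → ℝ → ℝ
  ht0 : t 0 = 0
  hmono : StrictMono t
  hcover : (1 : ℝ) ≤ t (Fin.last N)
  hx0 : ∀ i, x i 0 = x0 i
  hinit : ∀ i, x0 i ∈ Set.Icc (0 : ℝ) 1
  hdist : Function.Injective x0
  hslope : ∀ i j, s i j = 1 ∨ s i j = -1
  haffine : ∀ (i : Fin n) (j : Fin N), ∀ u ∈ Set.Icc (t j.castSucc) (t j.succ),
      x i u = x i (t j.castSucc) + s i j * (u - t j.castSucc)
  hswap : ∀ (j j' : Fin N), (j : ℕ) + 1 = (j' : ℕ) → ∀ i i' : Fin n, i ≠ i' →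
      x i (t j.succ) = x i' (t j.succ) → s i j' = s i' j
  hkeep : ∀ (j j' : Fin N), (j : ℕ) + 1 = (j' : ℕ) → ∀ i : Fin n,
      (∀ i' : Fin n, i' ≠ i → x i (t j.succ) ≠ x i' (t j.succ)) → s i j' = s i j
  hnocol : ∀ i i' : Fin n, i ≠ i' → ∀ (j : Fin N),
      ∀ u ∈ Set.Ioo (t j.castSucc) (t j.succ), x i u ≠ x i' u

/-!
Colliding ants that reverse behave like ghost ants that pass through each other: at every
moment, each ant sits on the line of slope equal to its current velocity through some initial
position. At a collision the ant takes over its partner's velocity and, sharing its position,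
its line. At time `1` such a line has left `(0, 1)`, so by continuity the ant has hit an end.
-/

open Set

theorem Fin.exists_mem_Icc_castSucc_succ {α : Type*} [LinearOrder α] {N : ℕ} [NeZero N]
    (f : Fin (N + 1) → α) {u : α} (h0 : f 0 ≤ u) (h1 : u ≤ f (Fin.last N)) :
    ∃ j : Fin N, u ∈ Icc (f j.castSucc) (f j.succ) := by
  obtain ⟨M, rfl⟩ := Nat.exists_eq_succ_of_ne_zero (NeZero.ne N)
  induction M with
  | zero => exact ⟨0, h0, h1⟩
  | succ M ih =>
    by_cases hu : u ≤ f (Fin.last (M + 1)).castSucc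
    · obtain ⟨j, hj⟩ := ih (f ∘ Fin.castSucc) h0 hu
      exact ⟨j.castSucc, by rw [Fin.succ_castSucc]; exact hj⟩
    · exact ⟨Fin.last (M + 1), (not_le.1 hu).le, by simpa using h1⟩

namespace ReversalSystem

variable {n N : ℕ}

theorem N_pos (sys : ReversalSystem n N) : 0 < N := by
  refine Nat.pos_of_ne_zero fun hN => ?_
  subst hN
  have := sys.hcover
  simp only [Fin.last_zero, sys.ht0] at this
  linarith

variable (sys : ReversalSystem n N)

theorem exists_mem_Icc {u : ℝ} (h0 : 0 ≤ u) (h1 : u ≤ 1) :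
    ∃ j : Fin N, u ∈ Icc (sys.t j.castSucc) (sys.t j.succ) :=
  haveI := NeZero.of_pos sys.N_pos
  Fin.exists_mem_Icc_castSucc_succ sys.t (sys.ht0 ▸ h0) (h1.trans sys.hcover)

theorem continuousOn_x (i : Fin n) : ContinuousOn (sys.x i) (Icc 0 1) := by
  have hpiece : ∀ j : Fin N, ContinuousOn (sys.x i) (Icc (sys.t j.castSucc) (sys.t j.succ)) :=
    fun j => (continuousOn_const.add (continuousOn_const.mul
      (continuousOn_id.sub continuousOn_const))).congr (sys.haffine i j)
  refine ((locallyFinite_of_finite _).continuousOn_iUnion (fun _ => isClosed_Icc) hpiece).mono ?_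
  intro u hu
  exact mem_iUnion.2 (sys.exists_mem_Icc hu.1 hu.2)

def OnGhostPath (a : Fin n) (j : Fin N) (u : ℝ) : Prop :=
  ∃ m, sys.x a u = sys.x0 m + sys.s a j * u

variable {sys} in
theorem OnGhostPath.of_mem_Icc {a : Fin n} {j : Fin N}
    (h : sys.OnGhostPath a j (sys.t j.castSucc)) {u : ℝ}
    (hu : u ∈ Icc (sys.t j.castSucc) (sys.t j.succ)) : sys.OnGhostPath a j u := by
  obtain ⟨m, hm⟩ := h
  exact ⟨m, by rw [sys.haffine a j u hu, hm]; ring⟩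

theorem onGhostPath_succ {j j' : Fin N} (hjj' : (j : ℕ) + 1 = j')
    (h : ∀ b, sys.OnGhostPath b j (sys.t j.castSucc)) (a : Fin n) :
    sys.OnGhostPath a j' (sys.t j'.castSucc) := by
  have hT : j'.castSucc = j.succ := Fin.ext (by simp [← hjj'])
  have hend : ∀ b, sys.OnGhostPath b j (sys.t j.succ) := fun b =>
    (h b).of_mem_Icc ⟨(sys.hmono (Fin.castSucc_lt_succ)).le, le_rfl⟩
  rw [hT]
  by_cases hcol : ∃ b, b ≠ a ∧ sys.x a (sys.t j.succ) = sys.x b (sys.t j.succ)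
  · obtain ⟨b, hba, hab⟩ := hcol
    obtain ⟨m, hm⟩ := hend b
    exact ⟨m, by rw [sys.hswap j j' hjj' a b hba.symm hab, hab, hm]⟩
  · push Not at hcol
    obtain ⟨m, hm⟩ := hend a
    exact ⟨m, by rw [sys.hkeep j j' hjj' a hcol, hm]⟩

theorem onGhostPath_castSucc (j : Fin N) (a : Fin n) :
    sys.OnGhostPath a j (sys.t j.castSucc) := by
  obtain ⟨k, hk⟩ := j
  induction k generalizing a with
  | zero => exact ⟨a, by simp [sys.ht0, sys.hx0]⟩
  | succ k ih =>
    exact sys.onGhostPath_succ (j := ⟨k, by omega⟩) rfl (fun b => ih b (by omega)) a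

theorem x_one_nonpos_or_one_le (i : Fin n) : sys.x i 1 ≤ 0 ∨ 1 ≤ sys.x i 1 := by
  obtain ⟨j, hj⟩ := sys.exists_mem_Icc zero_le_one le_rfl
  obtain ⟨m, hm⟩ := (sys.onGhostPath_castSucc j i).of_mem_Icc hj
  have hm01 := sys.hinit m
  rcases sys.hslope i j with hs | hs <;> rw [hm, hs]
  · exact Or.inr (by linarith [hm01.1])
  · exact Or.inl (by linarith [hm01.2])

end ReversalSystem

/-- every ant falls off (reaches an endpoint of the stick) by time 1. -/
theorem ants_all_fall_by_time_one (n N : ℕ) (sys : ReversalSystem n N) (i : Fin n) :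
    ∃ u ∈ Set.Icc (0 : ℝ) 1, sys.x i u = 0 ∨ sys.x i u = 1 := by
  have hcont := sys.continuousOn_x i
  obtain ⟨hstart0, hstart1⟩ : 0 ≤ sys.x i 0 ∧ sys.x i 0 ≤ 1 := sys.hx0 i ▸ sys.hinit i
  rcases sys.x_one_nonpos_or_one_le i with hend | hend
  · obtain ⟨u, hu, hu0⟩ := intermediate_value_Icc' zero_le_one hcont ⟨hend, hstart0⟩
    exact ⟨u, hu, .inl hu0⟩
  · obtain ⟨u, hu, hu1⟩ := intermediate_value_Icc zero_le_one hcont ⟨hstart1, hend⟩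
    exact ⟨u, hu, .inr hu1⟩
end

section
/- With the ants-on-a-stick dynamics (reversal at collisions), the multiset of ant positions at any time t equals the multiset of positions obtained under the 'pass-through' dynamics where each ant ignores collisions and moves in its initial direction at unit speed (with removal upon reaching an endpoint). -/
/-!
Track the multiset of (position, velocity) pairs. Between event times it is moved by the free
flow `(x, v) ↦ (x + v τ, v)`, and at an event time the ants meeting at a point merely exchange
their velocities, which leaves the multiset unchanged. So at every time it is the free flow of
the initial multiset, and projecting onto positions gives the pass-through positions.
-/

open Finset

section Exchange

variable {ι α β : Type*} [DecidableEq ι] (g g' : ι → β)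

theorem Finset.map_val_eq_of_exchange (s : Finset ι)
    (hswap : ∀ i ∈ s, ∀ i' ∈ s, i ≠ i' → g' i = g i')
    (hkeep : ∀ i ∈ s, (∀ i' ∈ s, i' = i) → g' i = g i) :
    s.val.map g' = s.val.map g := by
  by_cases hpair : #s = 2
  · obtain ⟨a, b, hab, rfl⟩ := card_eq_two.mp hpair
    have ha : a ∈ ({a, b} : Finset ι) := by simp
    have hb : b ∈ ({a, b} : Finset ι) := by simp
    simp [insert_val_of_notMem (notMem_singleton.mpr hab), hswap a ha b hb hab,
      hswap b hb a ha hab.symm]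
    exact Multiset.pair_comm _ _
  refine Multiset.map_congr rfl fun i hi => ?_
  by_cases halone : ∀ i' ∈ s, i' = i
  · exact hkeep i hi halone
  -- three pairwise exchanging elements force all old and new values to coincide
  have hothers : 1 < #(s.erase i) := by
    push Not at halone
    obtain ⟨i', hi', hne⟩ := halone
    have := card_erase_of_mem hi
    have : 0 < #(s.erase i) := card_pos.mpr ⟨i', mem_erase.mpr ⟨hne, hi'⟩⟩
    omega
  obtain ⟨a, ha, b, hb, hab⟩ := one_lt_card.mp hothers
  obtain ⟨hai, ha⟩ := mem_erase.mp ha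
  obtain ⟨hbi, hb⟩ := mem_erase.mp hb
  rw [hswap i hi a ha hai.symm, ← hswap b hb a ha hab.symm, hswap b hb i hi hbi]

variable [Fintype ι] [DecidableEq α] (f : ι → α)

theorem Finset.univ_val_map_prod_eq_of_exchange
    (hswap : ∀ i i', i ≠ i' → f i = f i' → g' i = g i')
    (hkeep : ∀ i, (∀ i', i' ≠ i → f i ≠ f i') → g' i = g i) :
    univ.val.map (fun i => (f i, g' i)) = univ.val.map (fun i => (f i, g i)) := by
  classical
  have hfiber : ∀ p, (univ.filter (f · = p)).val.map g' = (univ.filter (f · = p)).val.map g :=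
    fun p => map_val_eq_of_exchange g g' _
      (fun i hi i' hi' hne => hswap i i' hne (by simp_all))
      (fun i hi halone => hkeep i fun i' hne hf => hne (halone i' (by simp_all)))
  ext ⟨p, b⟩
  have := congrArg (Multiset.count b) (hfiber p)
  simp only [Multiset.count_map, filter_val, Multiset.filter_filter] at this ⊢
  convert this using 2 <;> ext i <;> simp [Prod.ext_iff, and_comm, eq_comm]

end Exchange

theorem Fin.exists_castSucc_le_le_succ {α : Type*} [LinearOrder α] :
    ∀ {M : ℕ} (t : Fin (M + 1 + 1) → α) {u : α}, t 0 ≤ u → u ≤ t (Fin.last _) →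
      ∃ j : Fin (M + 1), u ∈ Set.Icc (t j.castSucc) (t j.succ)
  | 0, _, _, h0, hlast => ⟨0, h0, hlast⟩
  | M + 1, t, u, h0, hlast => by
    by_cases hu : u ≤ t (Fin.last (M + 1)).castSucc
    · obtain ⟨j, hj⟩ := exists_castSucc_le_le_succ (t ∘ Fin.castSucc) h0 hu
      exact ⟨j.castSucc, by rw [Fin.succ_castSucc]; exact hj⟩
    · exact ⟨Fin.last _, (not_le.mp hu).le, hlast⟩

def freeFlow (τ : ℝ) (p : ℝ × ℝ) : ℝ × ℝ := (p.1 + p.2 * τ, p.2)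

theorem freeFlow_zero : freeFlow 0 = id := by
  funext p
  simp [freeFlow]

theorem freeFlow_comp_freeFlow (τ τ' : ℝ) : freeFlow τ' ∘ freeFlow τ = freeFlow (τ + τ') := by
  funext p
  exact Prod.ext (by simp only [Function.comp_apply, freeFlow]; ring) rfl

namespace ReversalSystem

variable {n N : ℕ} (sys : ReversalSystem n N)

def state (j : Fin N) (u : ℝ) : Multiset (ℝ × ℝ) :=
  univ.val.map fun i => (sys.x i u, sys.s i j)

theorem state_eq_map_freeFlow {j : Fin N} {u : ℝ}
    (hu : u ∈ Set.Icc (sys.t j.castSucc) (sys.t j.succ)) :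
    sys.state j u = (sys.state j (sys.t j.castSucc)).map (freeFlow (u - sys.t j.castSucc)) := by
  simp only [state, Multiset.map_map]
  exact Multiset.map_congr rfl fun i _ => by simp [freeFlow, sys.haffine i j u hu]

theorem state_eq_at_collision {j j' : Fin N} (hjj' : (j : ℕ) + 1 = j') :
    sys.state j' (sys.t j.succ) = sys.state j (sys.t j.succ) :=
  univ_val_map_prod_eq_of_exchange _ _ _ (sys.hswap j j' hjj') (sys.hkeep j j' hjj')

theorem state_castSucc_eq_map_freeFlow {M : ℕ} (sys : ReversalSystem n (M + 1)) (j : Fin (M + 1)) :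
    sys.state j (sys.t j.castSucc) = (sys.state 0 0).map (freeFlow (sys.t j.castSucc)) := by
  induction j using Fin.induction with
  | zero => simp [sys.ht0, freeFlow_zero]
  | succ j ih =>
    have hj : j.castSucc.castSucc ≤ j.castSucc.succ := Fin.castSucc_lt_succ.le
    rw [← Fin.succ_castSucc, sys.state_eq_at_collision (by simp),
      sys.state_eq_map_freeFlow ⟨sys.hmono.monotone hj, le_rfl⟩, ih, Multiset.map_map,
      freeFlow_comp_freeFlow, add_sub_cancel]

theorem state_eq_map_freeFlow_initial {M : ℕ} (sys : ReversalSystem n (M + 1)) {j : Fin (M + 1)}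
    {u : ℝ} (hu : u ∈ Set.Icc (sys.t j.castSucc) (sys.t j.succ)) :
    sys.state j u = (univ.val.map fun i => (sys.x0 i, sys.s i 0)).map (freeFlow u) := by
  rw [sys.state_eq_map_freeFlow hu, sys.state_castSucc_eq_map_freeFlow, Multiset.map_map,
    freeFlow_comp_freeFlow, add_sub_cancel]
  simp [state, sys.hx0]

end ReversalSystem

/-- at any time, the multiset of positions under reversal dynamics
equals the multiset of positions under pass-through dynamics (each ant moving
forever with its initial velocity). -/
theorem reversal_eq_pass_through_multiset (n N : ℕ) (hN : 0 < N)
    (sys : ReversalSystem n N) (u : ℝ)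
    (hu : u ∈ Set.Icc (0 : ℝ) (sys.t (Fin.last N))) :
    (Finset.univ.val.map fun i => sys.x i u) =
      (Finset.univ.val.map fun i : Fin n => sys.x0 i + sys.s i ⟨0, hN⟩ * u) := by
  obtain ⟨M, rfl⟩ := Nat.exists_eq_add_one_of_ne_zero hN.ne'
  obtain ⟨j, hj⟩ := Fin.exists_castSucc_le_le_succ sys.t (sys.ht0 ▸ hu.1) hu.2
  have := congrArg (Multiset.map Prod.fst) (sys.state_eq_map_freeFlow_initial hj)
  simpa [ReversalSystem.state, freeFlow, Multiset.map_map, Function.comp_def] using this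
end
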